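/- For all w, x ∈ S_n, one has w ≤ x in the Bruhat order if and only if t_w(i,j) ≤ t_x(i,j) for all 1 ≤ i, j ≤ n (equivalently, if and only if r_w(i,j) ≥ r_x(i,j) for all 1 ≤ i, j ≤ n). -/

import Mathlib

/-
Left multiplication by the transposition of the values `w p`, `w q` is right multiplication by
the transposition of the positions `p < q`. It raises the length exactly when `w p < w q`, and
then it lowers the rank function by one on the rectangle `p < a ≤ q`, `w p < b ≤ w q` and
leaves it unchanged elsewhere, so `w ≤ x` forces `r_x ≤ r_w`.

Conversely, let `r_x ≤ r_w` with `w ≠ x`, let `i` be the first position where `w` and `x`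
differ (then `w i < x i`), and let `j > i` be the first position with `w i ≤ x j < x i`.
Exchanging the entries of `x` at `i` and `j` goes one Bruhat step down, and comparing with the
rank of `w` at `(a, w i)` shows that the result is still dominated by `r_w`; induction on
`ℓ(x)` concludes. The co-rank version follows because `r_w(i, j) ≤ min i j`.
-/

namespace Paper

/-- The simple transposition `s_i = (i, i+1)` (1-based) in `S_n`, realized as a
permutation of `Fin n`. For `i` outside `{1, …, n-1}` we set `s i = 1`. -/
def s (n i : ℕ) : Equiv.Perm (Fin n) :=
  if h : 1 ≤ i ∧ i < n then Equiv.swap ⟨i - 1, by omega⟩ ⟨i, by omega⟩ else 1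

/-- The length of a permutation: its number of inversions. -/
def len {n : ℕ} (w : Equiv.Perm (Fin n)) : ℕ :=
  (Finset.univ.filter (fun p : Fin n × Fin n => p.1 < p.2 ∧ w p.2 < w p.1)).card

/-- `i` is a left descent of `w` if `1 ≤ i ≤ n-1` and `ℓ(s_i w) < ℓ(w)`. -/
def IsLeftDescent {n : ℕ} (w : Equiv.Perm (Fin n)) (i : ℕ) : Prop :=
  1 ≤ i ∧ i ≤ n - 1 ∧ len (s n i * w) < len w

/-- `i` is a right descent of `w` if `1 ≤ i ≤ n-1` and `ℓ(w s_i) < ℓ(w)`. -/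
def IsRightDescent {n : ℕ} (w : Equiv.Perm (Fin n)) (i : ℕ) : Prop :=
  1 ≤ i ∧ i ≤ n - 1 ∧ len (w * s n i) < len w

/-- A permutation is bigrassmannian if it has exactly one left descent and
exactly one right descent. -/
def Bigrassmannian {n : ℕ} (w : Equiv.Perm (Fin n)) : Prop :=
  (∃! i, IsLeftDescent w i) ∧ (∃! j, IsRightDescent w j)

/-- One step of the Bruhat order: `w ⋖ t * w` for a transposition `t`
with `ℓ(w) < ℓ(t w)`. -/
def BruhatStep {n : ℕ} (w w' : Equiv.Perm (Fin n)) : Prop :=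
  ∃ a b : Fin n, a ≠ b ∧ w' = Equiv.swap a b * w ∧ len w < len w'

/-- The Bruhat order on `S_n`: the partial order generated by `w < tw` whenever
`t` is a transposition and `ℓ(w) < ℓ(tw)`. -/
def BruhatLE {n : ℕ} : Equiv.Perm (Fin n) → Equiv.Perm (Fin n) → Prop :=
  Relation.ReflTransGen BruhatStep

/-- Strict Bruhat order. -/
def BruhatLT {n : ℕ} (x y : Equiv.Perm (Fin n)) : Prop :=
  BruhatLE x y ∧ x ≠ y

/-- The product `s_a s_{a+1} ⋯ s_b` of consecutive simple transpositions. -/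
def ascRun (n a b : ℕ) : Equiv.Perm (Fin n) :=
  ((List.range (b + 1 - a)).map (fun t => s n (a + t))).prod

/-- For `i ≤ j`: `b(i,j,k) = (s_i ⋯ s_{j+k})(s_{i-1} ⋯ s_{j+k-1}) ⋯ (s_{i-k} ⋯ s_j)`. -/
def bAux (n i j k : ℕ) : Equiv.Perm (Fin n) :=
  ((List.range (k + 1)).map (fun m => ascRun n (i - m) (j + k - m))).prod

/-- The bigrassmannian permutation `b(i,j,k)`; for `j < i` it is `b(j,i,k)⁻¹`. -/
def b (n i j k : ℕ) : Equiv.Perm (Fin n) :=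
  if i ≤ j then bAux n i j k else (bAux n j i k)⁻¹

/-- The value `w(i)` of a permutation `w ∈ S_n` at `i ∈ {1, …, n}`, 1-based. -/
def act {n : ℕ} (w : Equiv.Perm (Fin n)) (i : ℕ) : ℕ :=
  if h : 1 ≤ i ∧ i ≤ n then ((w ⟨i - 1, by omega⟩ : Fin n) : ℕ) + 1 else i

/-- The essential set of a permutation `w ∈ S_n`. -/
def Ess {n : ℕ} (w : Equiv.Perm (Fin n)) : Set (ℕ × ℕ) :=
  {p | 1 ≤ p.1 ∧ p.1 ≤ n - 1 ∧ 1 ≤ p.2 ∧ p.2 ≤ n - 1 ∧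
    p.1 < act w⁻¹ p.2 ∧ p.2 < act w p.1 ∧
    act w (p.1 + 1) ≤ p.2 ∧ act w⁻¹ (p.2 + 1) ≤ p.1}

/-- The rank function `r_w(i,j) = |{k ≤ i : w(k) ≤ j}|` (1-based). -/
def rnk {n : ℕ} (w : Equiv.Perm (Fin n)) (i j : ℕ) : ℕ :=
  ((Finset.Icc 1 i).filter (fun k => act w k ≤ j)).card

/-- The co-rank function `t_w(i,j) = min{i,j} - r_w(i,j)`. -/
def cork {n : ℕ} (w : Equiv.Perm (Fin n)) (i j : ℕ) : ℕ :=
  min i j - rnk w i j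

/-- The set of bigrassmannian permutations `y ≤ w` in Bruhat order. -/
def BSet {n : ℕ} (w : Equiv.Perm (Fin n)) : Set (Equiv.Perm (Fin n)) :=
  {y | Bigrassmannian y ∧ BruhatLE y w}

/-- The set of Bruhat-maximal elements of `BSet w`. -/
def BM {n : ℕ} (w : Equiv.Perm (Fin n)) : Set (Equiv.Perm (Fin n)) :=
  {y ∈ BSet w | ∀ z ∈ BSet w, BruhatLE y z → z = y}

section

open Equiv Finset

variable {n : ℕ}

def inversions (w : Perm (Fin n)) : Finset (Fin n × Fin n) :=
  univ.filter fun r => r.1 < r.2 ∧ w r.2 < w r.1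

@[simp]
theorem mem_inversions {w : Perm (Fin n)} {r : Fin n × Fin n} :
    r ∈ inversions w ↔ r.1 < r.2 ∧ w r.2 < w r.1 := by
  simp [inversions]

theorem len_eq_card_inversions (w : Perm (Fin n)) : len w = (inversions w).card := rfl

theorem len_lt_len_mul_swap {w : Perm (Fin n)} {p q : Fin n} (hpq : p < q) (hw : w p < w q) :
    len w < len (w * swap p q) := by
  set τ := swap p q
  have hτ : ∀ k, τ k = if k = p then q else if k = q then p else k := swap_apply_def p q
  -- an inversion `(k, l)` of `w` moves to `(τ k, τ l)` unless that pair is out of order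
  let φ : Fin n × Fin n → Fin n × Fin n := fun r =>
    if τ r.1 < τ r.2 then (τ r.1, τ r.2) else r
  have hmaps : ∀ r ∈ inversions w, φ r ∈ inversions (w * τ) := by
    rintro ⟨k, l⟩ hr
    rw [mem_inversions] at hr
    simp only [φ]
    split_ifs with h <;> simp only [mem_inversions, Perm.mul_apply, hτ] at h ⊢ <;> grind
  have hinj : Set.InjOn φ (inversions w) := by
    rintro ⟨k, l⟩ hr ⟨k', l'⟩ hr' h
    simp only [φ, mem_coe, mem_inversions] at hr hr' h
    split_ifs at h <;> simp only [Prod.mk.injEq, hτ] at h ⊢ <;> grind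
  have hpq_mem : (p, q) ∈ inversions (w * τ) \ (inversions w).image φ := by
    simp only [φ, mem_sdiff, mem_inversions, mem_image, Perm.mul_apply, not_exists, not_and,
      Prod.forall]
    refine ⟨⟨hpq, by simpa [τ] using hw⟩, fun k l hr h => ?_⟩
    split_ifs at h <;> simp only [Prod.mk.injEq, hτ] at h <;> grind
  rw [len_eq_card_inversions, len_eq_card_inversions, ← card_image_of_injOn hinj]
  refine card_lt_card ((ssubset_iff_of_subset fun r hr => ?_).2 ⟨_, mem_sdiff.1 hpq_mem⟩)
  obtain ⟨r, hr', rfl⟩ := mem_image.1 hr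
  exact hmaps r hr'

/-- The rank function `rnk` with 0-based positions and values, for all `i j : ℕ`. -/
def rk (w : Perm (Fin n)) (i j : ℕ) : ℕ :=
  #{k : Fin n | (k : ℕ) < i ∧ (w k : ℕ) < j}

theorem rk_eq_sum (w : Perm (Fin n)) (i j : ℕ) :
    rk w i j = ∑ k : Fin n, if (k : ℕ) < i ∧ (w k : ℕ) < j then 1 else 0 :=
  card_filter _ _

theorem rk_mul_swap {v : Perm (Fin n)} {p q : Fin n} (hpq : p < q) (hv : v q < v p) (a b : ℕ) :
    rk (v * swap p q) a b =
      rk v a b + if (p : ℕ) < a ∧ a ≤ q ∧ (v q : ℕ) < b ∧ b ≤ v p then 1 else 0 := by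
  have hreindex : rk (v * swap p q) a b =
      ∑ k : Fin n, if ((swap p q k : Fin n) : ℕ) < a ∧ (v k : ℕ) < b then 1 else 0 := by
    rw [rk_eq_sum, ← Equiv.sum_comp (swap p q)]
    simp only [Perm.mul_apply, swap_apply_self]
  have hpoint : ∀ k : Fin n,
      ((if ((swap p q k : Fin n) : ℕ) < a ∧ (v k : ℕ) < b then 1 else 0) +
        if k = p then (if (p : ℕ) < a ∧ a ≤ q ∧ (v p : ℕ) < b then 1 else 0) else 0) =
      (if (k : ℕ) < a ∧ (v k : ℕ) < b then 1 else 0) +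
        if k = q then (if (p : ℕ) < a ∧ a ≤ q ∧ (v q : ℕ) < b then 1 else 0) else 0 := by
    intro k
    rw [swap_apply_def]
    split_ifs <;> subst_vars <;> omega
  have hsum := sum_congr rfl fun k (_ : k ∈ univ) => hpoint k
  simp only [sum_add_distrib, sum_ite_eq', mem_univ, if_true, ← hreindex, ← rk_eq_sum] at hsum
  split_ifs at hsum ⊢ <;> omega

theorem lt_of_len_lt_len_mul_swap {w : Perm (Fin n)} {p q : Fin n} (hpq : p < q)
    (hlen : len w < len (w * swap p q)) : w p < w q := by
  by_contra hwq
  have hlt : w q < w p := lt_of_le_of_ne (not_lt.1 hwq) (w.injective.ne hpq.ne')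
  have := len_lt_len_mul_swap (w := w * swap p q) hpq (by simpa using hlt)
  rw [mul_assoc, swap_mul_self, mul_one] at this
  exact lt_asymm hlen this

theorem bruhatStep_iff {w w' : Perm (Fin n)} :
    BruhatStep w w' ↔ ∃ p q : Fin n, p < q ∧ w p < w q ∧ w' = w * swap p q := by
  constructor
  · rintro ⟨a, b, hab, rfl, hlen⟩
    obtain ⟨p, q, hpq, heq⟩ : ∃ p q, p < q ∧ swap a b * w = w * swap p q := by
      rcases lt_or_gt_of_ne (w.symm.injective.ne hab) with h | h
      · exact ⟨_, _, h, by rw [mul_swap_eq_swap_mul]; simp⟩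
      · exact ⟨_, _, h, by rw [mul_swap_eq_swap_mul, swap_comm]; simp⟩
    rw [heq] at hlen ⊢
    exact ⟨p, q, hpq, lt_of_len_lt_len_mul_swap hpq hlen, rfl⟩
  · rintro ⟨p, q, hpq, hw, rfl⟩
    exact ⟨w p, w q, w.injective.ne hpq.ne, mul_swap_eq_swap_mul w p q,
      len_lt_len_mul_swap hpq hw⟩

theorem rk_le_of_bruhatStep {w w' : Perm (Fin n)} (h : BruhatStep w w') (a b : ℕ) :
    rk w' a b ≤ rk w a b := by
  obtain ⟨p, q, hpq, hw, rfl⟩ := bruhatStep_iff.1 h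
  have := rk_mul_swap (v := w * swap p q) hpq (by simpa using hw) a b
  rw [mul_assoc, swap_mul_self, mul_one] at this
  omega

theorem rk_le_of_bruhatLE {w x : Perm (Fin n)} (h : BruhatLE w x) (a b : ℕ) :
    rk x a b ≤ rk w a b := by
  induction h with
  | refl => exact le_rfl
  | tail _ hstep ih => exact (rk_le_of_bruhatStep hstep a b).trans ih

theorem rk_succ (v : Perm (Fin n)) (k : Fin n) (b : ℕ) :
    rk v (k + 1) b = rk v k b + if (v k : ℕ) < b then 1 else 0 := by
  have hpoint : ∀ l : Fin n, (if (l : ℕ) < k + 1 ∧ (v l : ℕ) < b then 1 else 0) =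
      (if (l : ℕ) < k ∧ (v l : ℕ) < b then 1 else 0) +
        if l = k then (if (v k : ℕ) < b then 1 else 0) else 0 := by
    intro l
    split_ifs <;> subst_vars <;> omega
  rw [rk_eq_sum, rk_eq_sum, sum_congr rfl fun l _ => hpoint l, sum_add_distrib, sum_ite_eq']
  simp

theorem rk_congr {v w : Perm (Fin n)} {a : ℕ} (h : ∀ k : Fin n, (k : ℕ) < a → v k = w k)
    (b : ℕ) : rk v a b = rk w a b := by
  unfold rk
  congr 1
  exact filter_congr fun k _ => by grind

theorem val_lt_val_of_rk_le {w x : Perm (Fin n)} (H : ∀ a b, rk x a b ≤ rk w a b) {i : Fin n}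
    (hagree : ∀ k < i, w k = x k) (hne : w i ≠ x i) : w i < x i := by
  by_contra hwx
  have hlt : (x i : ℕ) < w i := lt_of_le_of_ne (not_lt.1 hwx) (Fin.val_ne_of_ne hne.symm)
  have := H (i + 1) (x i + 1)
  rw [rk_succ, rk_succ, rk_congr (fun k hk => hagree k hk)] at this
  simp only [lt_add_one, if_true, if_neg (show ¬ (w i : ℕ) < x i + 1 by omega)] at this
  omega

theorem rk_lt_rk_of_mem_rectangle {w x : Perm (Fin n)} (H : ∀ a b, rk x a b ≤ rk w a b)
    {i j : Fin n} (hagree : ∀ k < i, w k = x k) (hwj : w i ≤ x j) (hji : x j < x i)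
    (hmin : ∀ k, i < k → k < j → x k < w i ∨ x i ≤ x k)
    {a b : ℕ} (hia : i < a) (haj : a ≤ j) (hjb : x j < b) (hbi : b ≤ x i) :
    rk x a b < rk w a b := by
  -- Among the positions `k < a`, the values of `x` in `[w i, b)` sit at positions `k < i`, where
  -- `x` agrees with `w`; `w` has one more such value, at `i`. Add the ranks at `(a, w i)`.
  have hpoint : ∀ k : Fin n,
      (if (k : ℕ) < a ∧ (x k : ℕ) < b then 1 else 0) +
        (if (k : ℕ) < a ∧ (w k : ℕ) < w i then 1 else 0) + (if k = i then 1 else 0) ≤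
      (if (k : ℕ) < a ∧ (w k : ℕ) < b then 1 else 0) +
        (if (k : ℕ) < a ∧ (x k : ℕ) < w i then 1 else 0) := by
    intro k
    rcases lt_trichotomy k i with hk | rfl | hk
    · rw [hagree k hk, if_neg hk.ne, add_zero]
    · split_ifs <;> omega
    · rw [if_neg hk.ne']
      by_cases hka : (k : ℕ) < a
      · have := hmin k hk (by omega)
        split_ifs <;> omega
      · simp [hka]
  have hsum := sum_le_sum fun k (_ : k ∈ univ) => hpoint k
  simp only [sum_add_distrib, sum_ite_eq', mem_univ, if_true, ← rk_eq_sum] at hsum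
  have := H a (w i)
  omega

theorem exists_bruhatStep_rk_le {w x : Perm (Fin n)} (H : ∀ a b, rk x a b ≤ rk w a b)
    (hne : w ≠ x) : ∃ x', BruhatStep x' x ∧ ∀ a b, rk x' a b ≤ rk w a b := by
  obtain ⟨i, hi, hmin_i⟩ := wellFounded_lt.has_min {k | w k ≠ x k}
    (not_forall.1 fun h => hne (Equiv.ext h))
  have hagree : ∀ k < i, w k = x k := fun k hk => by_contra fun h => hmin_i k h hk
  have hwx := val_lt_val_of_rk_le H hagree hi
  -- the position of the value `w i` in `x` qualifies for `j`, so a minimal one exists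
  have hpos : i < x⁻¹ (w i) := by
    rcases lt_trichotomy (x⁻¹ (w i)) i with h | h | h
    · exact absurd (w.injective ((hagree _ h).trans (x.apply_symm_apply _))) h.ne
    · exact absurd (by rw [← x.apply_symm_apply (w i)]; exact congrArg x h) hi
    · exact h
  obtain ⟨j, ⟨hij, hwj, hji⟩, hmin⟩ := wellFounded_lt.has_min
    {k | i < k ∧ w i ≤ x k ∧ x k < x i} ⟨x⁻¹ (w i), hpos, by simp, by simpa using hwx⟩
  refine ⟨x * swap i j, bruhatStep_iff.2 ⟨i, j, hij, by simpa using hji, by simp [mul_assoc]⟩,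
    fun a b => ?_⟩
  rw [rk_mul_swap hij hji]
  split_ifs with hrect
  · exact rk_lt_rk_of_mem_rectangle H hagree hwj hji
      (fun k hik hkj => by by_contra! h; exact hmin k ⟨hik, h⟩ hkj)
      hrect.1 hrect.2.1 hrect.2.2.1 hrect.2.2.2
  · simpa using H a b

theorem bruhatLE_of_rk_le {w x : Perm (Fin n)} (H : ∀ a b, rk x a b ≤ rk w a b) :
    BruhatLE w x := by
  induction hlen : len x using Nat.strong_induction_on generalizing x with
  | _ m ih =>
    by_cases hwx : w = x
    · exact hwx ▸ Relation.ReflTransGen.refl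
    obtain ⟨x', hstep, H'⟩ := exists_bruhatStep_rk_le H hwx
    have hlt : len x' < m := by
      obtain ⟨-, -, -, -, h⟩ := hstep
      exact hlen ▸ h
    exact (ih _ hlt H' rfl).tail hstep

theorem bruhatLE_iff_rk_le {w x : Perm (Fin n)} :
    BruhatLE w x ↔ ∀ a b, rk x a b ≤ rk w a b :=
  ⟨rk_le_of_bruhatLE, bruhatLE_of_rk_le⟩

theorem rk_le_left (w : Perm (Fin n)) (a b : ℕ) : rk w a b ≤ a :=
  (card_le_card_of_injOn (fun k : Fin n => (k : ℕ)) (fun k hk => by simp_all)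
    Fin.val_injective.injOn).trans (card_range a).le

theorem rk_le_right (w : Perm (Fin n)) (a b : ℕ) : rk w a b ≤ b :=
  (card_le_card_of_injOn (fun k : Fin n => (w k : ℕ)) (fun k hk => by simp_all)
    (Fin.val_injective.comp w.injective).injOn).trans (card_range b).le

theorem rk_min_min (w : Perm (Fin n)) (a b : ℕ) : rk w (min a n) (min b n) = rk w a b := by
  unfold rk
  congr 1
  exact filter_congr fun k _ => by have := (w k).isLt; omega

theorem act_succ (w : Perm (Fin n)) (k : Fin n) : act w (k + 1) = w k + 1 := by
  simp [act]

theorem rnk_eq_rk (w : Perm (Fin n)) {i : ℕ} (hi : i ≤ n) (j : ℕ) : rnk w i j = rk w i j := by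
  symm
  unfold rk rnk
  apply card_bij (fun (k : Fin n) _ => (k : ℕ) + 1)
  · intro k hk
    simp only [mem_filter, mem_univ, true_and, mem_Icc, act_succ] at hk ⊢
    omega
  · intro k _ l _ h
    exact Fin.ext (by omega)
  · intro m hm
    simp only [mem_filter, mem_Icc] at hm
    refine ⟨⟨m - 1, by omega⟩, ?_, by simp; omega⟩
    have hm1 : m = (⟨m - 1, by omega⟩ : Fin n) + 1 := by simp; omega
    rw [hm1, act_succ] at hm
    simp only [mem_filter, mem_univ, true_and]
    omega

theorem forall_rk_le_iff_forall_rnk_le {w x : Perm (Fin n)} :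
    (∀ a b, rk x a b ≤ rk w a b) ↔
      ∀ i j : ℕ, 1 ≤ i → i ≤ n → 1 ≤ j → j ≤ n → rnk x i j ≤ rnk w i j := by
  refine ⟨fun H i j _ hi _ _ => by simpa only [rnk_eq_rk _ hi] using H i j, fun H a b => ?_⟩
  rw [← rk_min_min x, ← rk_min_min w]
  by_cases ha : min a n = 0
  · have := rk_le_left x (min a n) (min b n)
    omega
  by_cases hb : min b n = 0
  · have := rk_le_right x (min a n) (min b n)
    omega
  rw [← rnk_eq_rk _ (min_le_right a n), ← rnk_eq_rk _ (min_le_right a n)]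
  exact H _ _ (by omega) (min_le_right a n) (by omega) (min_le_right b n)

theorem cork_le_cork_iff {w x : Perm (Fin n)} {i : ℕ} (hi : i ≤ n) (j : ℕ) :
    cork w i j ≤ cork x i j ↔ rnk x i j ≤ rnk w i j := by
  have hw := rnk_eq_rk w hi j ▸ le_min (rk_le_left w i j) (rk_le_right w i j)
  have hx := rnk_eq_rk x hi j ▸ le_min (rk_le_left x i j) (rk_le_right x i j)
  unfold cork
  omega

end

theorem stmt8 (n : ℕ) (w x : Equiv.Perm (Fin n)) :
    (BruhatLE w x ↔
      ∀ i j : ℕ, 1 ≤ i → i ≤ n → 1 ≤ j → j ≤ n → cork w i j ≤ cork x i j) ∧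
    (BruhatLE w x ↔
      ∀ i j : ℕ, 1 ≤ i → i ≤ n → 1 ≤ j → j ≤ n → rnk x i j ≤ rnk w i j) := by
  have hrnk := (bruhatLE_iff_rk_le (w := w) (x := x)).trans forall_rk_le_iff_forall_rnk_le
  refine ⟨hrnk.trans ⟨fun H i j h1 hi h2 hj => ?_, fun H i j h1 hi h2 hj => ?_⟩, hrnk⟩
  · exact (cork_le_cork_iff hi j).2 (H i j h1 hi h2 hj)
  · exact (cork_le_cork_iff hi j).1 (H i j h1 hi h2 hj)

end Paper
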